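/- If u is an order unit in I^{2n₀}[G] for some n₀ ≥ 1 (G finitely generated by symmetric S), then for each n ≥ 1 the element uₙ = ∑_{s₁,…,sₙ∈S}(1-sₙ)*⋯(1-s₁)* u (1-s₁)⋯(1-sₙ) is an order unit in I^{2(n₀+n)}[G]. -/

import Mathlib

open MonoidAlgebra

variable {G : Type} [Group G]

/-- The additive map on the real group ring induced by `g ↦ g⁻¹`. -/
noncomputable def mstarHom (G : Type) [Group G] :
    MonoidAlgebra ℝ G →+ MonoidAlgebra ℝ G :=
  { toFun := MonoidAlgebra.mapDomain Inv.inv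
    map_zero' := MonoidAlgebra.mapDomain_zero _
    map_add' := MonoidAlgebra.mapDomain_add _ }

lemma mstarHom_single (a : G) (r : ℝ) :
    mstarHom G (MonoidAlgebra.single a r) = MonoidAlgebra.single a⁻¹ r :=
  MonoidAlgebra.mapDomain_single

private lemma mstar_mul (f g : MonoidAlgebra ℝ G) :
    mstarHom G (f * g) = mstarHom G g * mstarHom G f := by
  induction f using MonoidAlgebra.induction_linear with
  | zero => simp
  | add a b ha hb => simp only [add_mul, map_add, ha, hb, mul_add]
  | single a r =>
    induction g using MonoidAlgebra.induction_linear with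
    | zero => simp
    | add c d hc hd => simp only [mul_add, map_add, hc, hd, add_mul]
    | single c s =>
      simp only [MonoidAlgebra.single_mul_single, mstarHom_single, mul_inv_rev,
        mul_comm]

/-- The star ring structure on `ℝG` whose involution is induced by `g ↦ g⁻¹`. -/
noncomputable instance grpStar : StarRing (MonoidAlgebra ℝ G) where
  star f := mstarHom G f
  star_involutive f := by
    show MonoidAlgebra.ofCoeff (Finsupp.mapDomain _ (Finsupp.mapDomain _ f.coeff)) = f
    have h : (Inv.inv ∘ Inv.inv : G → G) = id := by funext x; simp
    rw [← Finsupp.mapDomain_comp, h, Finsupp.mapDomain_id]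
  star_add f g := map_add _ f g
  star_mul f g := mstar_mul f g

/-- The augmentation ideal `I[G]`, as an `ℝ`-subspace of `ℝG`: the kernel of the
augmentation homomorphism sending every group element to `1`. -/
noncomputable def Iaug (G : Type) [Group G] : Submodule ℝ (MonoidAlgebra ℝ G) :=
  LinearMap.ker ((MonoidAlgebra.lift ℝ ℝ G 1).toLinearMap)

/-- Sums of hermitian squares `∑ aᵢ* aᵢ` in a `*`-algebra. -/
noncomputable def SOS (A : Type*) [NonUnitalSemiring A] [StarRing A] : AddSubmonoid A :=
  AddSubmonoid.closure {x | ∃ a, x = star a * a}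

/-- `u₀ = u`, `uₙ = ∑_{s₁,…,sₙ∈S}(1-sₙ)*⋯(1-s₁)* u (1-s₁)⋯(1-sₙ)`, via the
recursion `u_{n+1} = ∑_{s∈S} (1-s)* uₙ (1-s)`. -/
noncomputable def iter (S : Finset G) (u : MonoidAlgebra ℝ G) :
    ℕ → MonoidAlgebra ℝ G
  | 0 => u
  | n + 1 => ∑ s ∈ S,
      star (1 - MonoidAlgebra.of ℝ G s) * iter S u n * (1 - MonoidAlgebra.of ℝ G s)

section Aux
variable {G : Type} [Group G]

lemma star_of' (s : G) : star (of ℝ G s) = of ℝ G s⁻¹ := by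
  show mstarHom G (of ℝ G s) = of ℝ G s⁻¹
  rw [MonoidAlgebra.of_apply, MonoidAlgebra.of_apply]; exact mstarHom_single s 1

lemma star_smul' (r : ℝ) (x : MonoidAlgebra ℝ G) : star (r • x) = r • star x :=
  MonoidAlgebra.mapDomain_smul Inv.inv r x

lemma lift_star (x : MonoidAlgebra ℝ G) :
    MonoidAlgebra.lift ℝ ℝ G 1 (star x) = MonoidAlgebra.lift ℝ ℝ G 1 x := by
  induction x using MonoidAlgebra.induction_linear with
  | zero => simp
  | add a b ha hb => rw [star_add, map_add, map_add, ha, hb]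
  | single a r =>
    show MonoidAlgebra.lift ℝ ℝ G 1 (mstarHom G _) = _
    rw [mstarHom_single]
    simp [MonoidAlgebra.lift_apply]

lemma one_sub_mem (s : G) : (1 - of ℝ G s) ∈ Iaug G := by
  simp [Iaug, LinearMap.mem_ker]

lemma Iaug_mul_mem {x : MonoidAlgebra ℝ G} (hx : x ∈ Iaug G) (a : MonoidAlgebra ℝ G) :
    x * a ∈ Iaug G := by
  simp only [Iaug, LinearMap.mem_ker, AlgHom.toLinearMap_apply] at *
  rw [map_mul, hx, zero_mul]

lemma mul_Iaug_mem {x : MonoidAlgebra ℝ G} (hx : x ∈ Iaug G) (a : MonoidAlgebra ℝ G) :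
    a * x ∈ Iaug G := by
  simp only [Iaug, LinearMap.mem_ker, AlgHom.toLinearMap_apply] at *
  rw [map_mul, hx, mul_zero]

lemma star_Iaug_mem {x : MonoidAlgebra ℝ G} (hx : x ∈ Iaug G) : star x ∈ Iaug G := by
  simp only [Iaug, LinearMap.mem_ker, AlgHom.toLinearMap_apply] at *
  rw [lift_star, hx]

lemma mul_pow_mem {m : ℕ} {x : MonoidAlgebra ℝ G} (hx : x ∈ (Iaug G) ^ (m+1))
    (a : MonoidAlgebra ℝ G) : a * x ∈ (Iaug G) ^ (m+1) := by
  rw [pow_succ'] at hx ⊢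
  refine Submodule.mul_induction_on hx (fun y hy z hz => ?_) (fun p q hp hq => ?_)
  · rw [← mul_assoc]; exact Submodule.mul_mem_mul (mul_Iaug_mem hy a) hz
  · rw [mul_add]; exact add_mem hp hq

lemma pow_mul_mem {m : ℕ} {x : MonoidAlgebra ℝ G} (hx : x ∈ (Iaug G) ^ (m+1))
    (a : MonoidAlgebra ℝ G) : x * a ∈ (Iaug G) ^ (m+1) := by
  rw [pow_succ] at hx ⊢
  refine Submodule.mul_induction_on hx (fun y hy z hz => ?_) (fun p q hp hq => ?_)
  · rw [mul_assoc]; exact Submodule.mul_mem_mul hy (Iaug_mul_mem hz a)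
  · rw [add_mul]; exact add_mem hp hq

lemma star_pow_mem {m : ℕ} {x : MonoidAlgebra ℝ G} (hx : x ∈ (Iaug G) ^ m) :
    star x ∈ (Iaug G) ^ m := by
  induction m generalizing x with
  | zero =>
    rw [pow_zero, Submodule.mem_one] at hx ⊢
    obtain ⟨r, rfl⟩ := hx
    have h : star ((algebraMap ℝ (MonoidAlgebra ℝ G)) r) = algebraMap ℝ (MonoidAlgebra ℝ G) r := by
      rw [Algebra.algebraMap_eq_smul_one, star_smul', star_one]
    exact ⟨r, h.symm⟩
  | succ k ih =>
    rw [pow_succ'] at hx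
    rw [pow_succ]
    refine Submodule.mul_induction_on hx (fun y hy z hz => ?_) (fun p q hp hq => ?_)
    · rw [star_mul]; exact Submodule.mul_mem_mul (ih hz) (star_Iaug_mem hy)
    · rw [star_add]; exact add_mem hp hq

end Aux
section Aux2
variable {G : Type} [Group G]

lemma mem_SOS (a : MonoidAlgebra ℝ G) : star a * a ∈ SOS (MonoidAlgebra ℝ G) :=
  AddSubmonoid.subset_closure ⟨a, rfl⟩

lemma SOS_star {q : MonoidAlgebra ℝ G} (hq : q ∈ SOS (MonoidAlgebra ℝ G)) : star q = q := by
  refine AddSubmonoid.closure_induction (fun x hx => ?_) (by simpa using zero_mem (SOS (MonoidAlgebra ℝ G))) (fun x y _ _ hx hy => ?_) hq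
  · obtain ⟨a, rfl⟩ := hx; rw [star_mul, star_star]
  · rw [star_add, hx, hy]

lemma SOS_conj {q : MonoidAlgebra ℝ G} (hq : q ∈ SOS (MonoidAlgebra ℝ G))
    (a : MonoidAlgebra ℝ G) : star a * q * a ∈ SOS (MonoidAlgebra ℝ G) := by
  refine AddSubmonoid.closure_induction (fun x hx => ?_) (by simpa using zero_mem (SOS (MonoidAlgebra ℝ G))) (fun x y _ _ hx hy => ?_) hq
  · obtain ⟨b, rfl⟩ := hx
    have : star a * (star b * b) * a = star (b * a) * (b * a) := by
      rw [star_mul]; noncomm_ring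
    rw [this]; exact mem_SOS _
  · have : star a * (x + y) * a = star a * x * a + star a * y * a := by noncomm_ring
    rw [this]; exact add_mem hx hy

lemma SOS_smul {r : ℝ} (hr : 0 ≤ r) {q : MonoidAlgebra ℝ G}
    (hq : q ∈ SOS (MonoidAlgebra ℝ G)) : r • q ∈ SOS (MonoidAlgebra ℝ G) := by
  refine AddSubmonoid.closure_induction (fun x hx => ?_) (by simpa using zero_mem (SOS (MonoidAlgebra ℝ G))) (fun x y _ _ hx hy => ?_) hq
  · obtain ⟨b, rfl⟩ := hx
    have : r • (star b * b) = star (Real.sqrt r • b) * (Real.sqrt r • b) := by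
      rw [star_smul', smul_mul_assoc, mul_smul_comm, smul_smul, Real.mul_self_sqrt hr]
    rw [this]; exact mem_SOS _
  · rw [smul_add]; exact add_mem hx hy

end Aux2
section Aux3
variable {G : Type} [Group G]

/-- generators of the right ideal spanned by `(1-s)`. -/
def Lset (S : Finset G) : Set (MonoidAlgebra ℝ G) :=
  {z | ∃ s ∈ S, ∃ a, z = (1 - of ℝ G s) * a}

def Rset (S : Finset G) : Set (MonoidAlgebra ℝ G) :=
  {z | ∃ t ∈ S, ∃ a, z = a * (1 - of ℝ G t)}

lemma Lspan_mul {S : Finset G} {z : MonoidAlgebra ℝ G}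
    (hz : z ∈ Submodule.span ℝ (Lset S)) (b : MonoidAlgebra ℝ G) :
    z * b ∈ Submodule.span ℝ (Lset S) := by
  refine Submodule.span_induction (fun x hx => ?_) (by simp) (fun x y _ _ hx hy => ?_)
    (fun r x _ hx => ?_) hz
  · obtain ⟨s, hs, a, rfl⟩ := hx
    exact Submodule.subset_span ⟨s, hs, a * b, by rw [mul_assoc]⟩
  · rw [add_mul]; exact add_mem hx hy
  · rw [smul_mul_assoc]; exact Submodule.smul_mem _ r hx

lemma Rspan_mul {S : Finset G} {z : MonoidAlgebra ℝ G}
    (hz : z ∈ Submodule.span ℝ (Rset S)) (b : MonoidAlgebra ℝ G) :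
    b * z ∈ Submodule.span ℝ (Rset S) := by
  refine Submodule.span_induction (fun x hx => ?_) (by simp) (fun x y _ _ hx hy => ?_)
    (fun r x _ hx => ?_) hz
  · obtain ⟨t, ht, a, rfl⟩ := hx
    exact Submodule.subset_span ⟨t, ht, b * a, by rw [mul_assoc]⟩
  · rw [mul_add]; exact add_mem hx hy
  · rw [mul_smul_comm]; exact Submodule.smul_mem _ r hx

lemma of_sub_one_mem_Lspan {S : Finset G} (hS : Subgroup.closure (S : Set G) = ⊤) (g : G) :
    of ℝ G g - 1 ∈ Submodule.span ℝ (Lset S) := by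
  have hg : g ∈ Subgroup.closure (S : Set G) := by rw [hS]; trivial
  refine Subgroup.closure_induction (fun x hx => ?_)
    (by rw [map_one, sub_self]; exact zero_mem _) (fun x y _ _ hx hy => ?_)
    (fun x _ hx => ?_) hg
  · have : of ℝ G x - 1 = (-1 : ℝ) • ((1 - of ℝ G x) * 1) := by
      rw [mul_one]; module
    rw [this]
    exact Submodule.smul_mem _ _ (Submodule.subset_span ⟨x, hx, 1, rfl⟩)
  · have : of ℝ G (x * y) - 1 = (of ℝ G x - 1) * of ℝ G y + (of ℝ G y - 1) := by
      rw [map_mul]; noncomm_ring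
    rw [this]
    exact add_mem (Lspan_mul hx _) hy
  · have : of ℝ G x⁻¹ - 1 = (-1 : ℝ) • ((of ℝ G x - 1) * of ℝ G x⁻¹) := by
      have h1 : of ℝ G x * of ℝ G x⁻¹ = 1 := by rw [← map_mul, mul_inv_cancel, map_one]
      rw [sub_mul, h1, one_mul]; module
    rw [this]
    exact Submodule.smul_mem _ _ (Lspan_mul hx _)

lemma of_sub_one_mem_Rspan {S : Finset G} (hS : Subgroup.closure (S : Set G) = ⊤) (g : G) :
    of ℝ G g - 1 ∈ Submodule.span ℝ (Rset S) := by
  have hg : g ∈ Subgroup.closure (S : Set G) := by rw [hS]; trivial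
  refine Subgroup.closure_induction (fun x hx => ?_)
    (by rw [map_one, sub_self]; exact zero_mem _) (fun x y _ _ hx hy => ?_)
    (fun x _ hx => ?_) hg
  · have : of ℝ G x - 1 = (-1 : ℝ) • (1 * (1 - of ℝ G x)) := by
      rw [one_mul]; module
    rw [this]
    exact Submodule.smul_mem _ _ (Submodule.subset_span ⟨x, hx, 1, rfl⟩)
  · have : of ℝ G (x * y) - 1 = of ℝ G x * (of ℝ G y - 1) + (of ℝ G x - 1) := by
      rw [map_mul]; noncomm_ring
    rw [this]
    exact add_mem (Rspan_mul hy _) hx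
  · have : of ℝ G x⁻¹ - 1 = (-1 : ℝ) • (of ℝ G x⁻¹ * (of ℝ G x - 1)) := by
      have h1 : of ℝ G x⁻¹ * of ℝ G x = 1 := by rw [← map_mul, inv_mul_cancel, map_one]
      rw [mul_sub, h1, mul_one]; module
    rw [this]
    exact Submodule.smul_mem _ _ (Rspan_mul hx _)

lemma Iaug_decomp {x : MonoidAlgebra ℝ G} (hx : x ∈ Iaug G) :
    x = ∑ g ∈ x.coeff.support, x.coeff g • (of ℝ G g - 1) := by
  have hx0 : MonoidAlgebra.lift ℝ ℝ G 1 x = 0 := hx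
  have hsum : ∑ g ∈ x.coeff.support, x.coeff g = 0 := by
    rw [MonoidAlgebra.lift_apply] at hx0
    simpa [Finsupp.sum] using hx0
  have h1 : ∑ g ∈ x.coeff.support, x.coeff g • of ℝ G g = x := by
    have : ∀ g : G, x.coeff g • of ℝ G g = MonoidAlgebra.single g (x.coeff g) := by
      intro g; rw [MonoidAlgebra.of_apply, MonoidAlgebra.smul_single, smul_eq_mul, mul_one]
    simp_rw [this]
    exact (MonoidAlgebra.sum_coeff_single x)
  calc x = ∑ g ∈ x.coeff.support, x.coeff g • of ℝ G g - (∑ g ∈ x.coeff.support, x.coeff g) • (1 : MonoidAlgebra ℝ G) := by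
        rw [h1, hsum, zero_smul, sub_zero]
    _ = ∑ g ∈ x.coeff.support, x.coeff g • (of ℝ G g - 1) := by
        rw [Finset.sum_smul]; rw [← Finset.sum_sub_distrib]; simp [smul_sub]

lemma Iaug_le_Lspan {S : Finset G} (hS : Subgroup.closure (S : Set G) = ⊤) :
    Iaug G ≤ Submodule.span ℝ (Lset S) := by
  intro x hx
  rw [Iaug_decomp hx]
  exact Submodule.sum_mem _ fun g _ =>
    Submodule.smul_mem _ _ (of_sub_one_mem_Lspan hS g)

lemma Iaug_le_Rspan {S : Finset G} (hS : Subgroup.closure (S : Set G) = ⊤) :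
    Iaug G ≤ Submodule.span ℝ (Rset S) := by
  intro x hx
  rw [Iaug_decomp hx]
  exact Submodule.sum_mem _ fun g _ =>
    Submodule.smul_mem _ _ (of_sub_one_mem_Rspan hS g)

end Aux3
section Aux4
variable {G : Type} [Group G]

lemma star_one_sub (s : G) : star (1 - of ℝ G s) = 1 - of ℝ G s⁻¹ := by
  rw [star_sub, star_one, star_of']

/-- Generators `(1-s)* w (1-t)` with `w ∈ I^m`. -/
def GenT (S : Finset G) (m : ℕ) : Set (MonoidAlgebra ℝ G) :=
  {z | ∃ s ∈ S, ∃ t ∈ S, ∃ w ∈ (Iaug G) ^ m,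
    z = star (1 - of ℝ G s) * w * (1 - of ℝ G t)}

lemma decomp2 {S : Finset G} (hS : Subgroup.closure (S : Set G) = ⊤)
    (hsym : ∀ s ∈ S, s⁻¹ ∈ S) (m : ℕ) (hm : 1 ≤ m) {v : MonoidAlgebra ℝ G}
    (hv : v ∈ (Iaug G) ^ (m + 2)) : v ∈ Submodule.span ℝ (GenT S m) := by
  obtain ⟨k, rfl⟩ : ∃ k, m = k + 1 := ⟨m - 1, by omega⟩
  rw [show k + 1 + 2 = (k + 1 + 1) + 1 from rfl, pow_succ', pow_succ] at hv
  refine Submodule.mul_induction_on hv (fun x hx y hy => ?_) (fun a b ha hb => add_mem ha hb)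
  refine Submodule.mul_induction_on hy (fun w hw z hz => ?_) (fun a b ha hb => ?_)
  · -- x ∈ I, w ∈ I^(k+1), z ∈ I;  goal : x * (w * z) ∈ span
    refine Submodule.span_induction (fun x' hx' => ?_)
      (by rw [zero_mul]; exact zero_mem _)
      (fun a b _ _ ha hb => by rw [add_mul]; exact add_mem ha hb)
      (fun r a _ ha => by rw [smul_mul_assoc]; exact Submodule.smul_mem _ r ha)
      (Iaug_le_Lspan hS hx)
    obtain ⟨s, hs, a, rfl⟩ := hx'
    refine Submodule.span_induction (fun z' hz' => ?_)
      (by rw [mul_zero, mul_zero]; exact zero_mem _)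
      (fun c d _ _ hc hd => by rw [mul_add, mul_add]; exact add_mem hc hd)
      (fun r c _ hc => by rw [mul_smul_comm, mul_smul_comm]; exact Submodule.smul_mem _ r hc)
      (Iaug_le_Rspan hS hz)
    obtain ⟨t, ht, b, rfl⟩ := hz'
    refine Submodule.subset_span ⟨s⁻¹, hsym s hs, t, ht, a * w * b, ?_, ?_⟩
    · exact pow_mul_mem (mul_pow_mem hw a) b
    · rw [star_one_sub, inv_inv]; noncomm_ring
  · rw [mul_add]; exact add_mem ha hb

lemma span_subset_addclosure {s : Set (MonoidAlgebra ℝ G)}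
    (hs : ∀ r : ℝ, ∀ x ∈ s, r • x ∈ s) {x : MonoidAlgebra ℝ G}
    (hx : x ∈ Submodule.span ℝ s) : x ∈ AddSubmonoid.closure s := by
  refine Submodule.span_induction (fun z hz => AddSubmonoid.subset_closure hz)
    (zero_mem _) (fun a b _ _ ha hb => add_mem ha hb) (fun r a _ ha => ?_) hx
  refine AddSubmonoid.closure_induction (fun z hz => AddSubmonoid.subset_closure (hs r z hz))
    (by rw [smul_zero]; exact zero_mem _)
    (fun a b _ _ ha hb => by rw [smul_add]; exact add_mem ha hb) ha

end Aux4
section Aux5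
variable {G : Type} [Group G]

lemma core (S : Finset G) (m : ℕ) (u : MonoidAlgebra ℝ G)
    (hord2 : ∀ v ∈ (Iaug G) ^ (2 * m), star v = v →
      ∃ R : ℝ, 0 ≤ R ∧ v + R • u ∈ SOS (MonoidAlgebra ℝ G) ∧ R • u ∈ SOS (MonoidAlgebra ℝ G))
    {s t : G} (hs : s ∈ S) (ht : t ∈ S) {w : MonoidAlgebra ℝ G}
    (hw : w ∈ (Iaug G) ^ (2 * m)) :
    ∃ R : ℝ, 0 ≤ R ∧
      (star (1 - of ℝ G s) * w * (1 - of ℝ G t)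
        + star (1 - of ℝ G t) * star w * (1 - of ℝ G s))
        + R • (∑ s' ∈ S, star (1 - of ℝ G s') * u * (1 - of ℝ G s'))
          ∈ SOS (MonoidAlgebra ℝ G) := by
  classical
  set x := 1 - of ℝ G s with hxdef
  set y := 1 - of ℝ G t with hydef
  rw [show 2 * m = m + m by omega, pow_add] at hw
  have step1 : ∃ R₁ R₂ : ℝ, 0 ≤ R₁ ∧ 0 ≤ R₂ ∧
      (star x * w * y + star y * star w * x) + R₁ • (star x * u * x)
        + R₂ • (star y * u * y) ∈ SOS (MonoidAlgebra ℝ G)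
      ∧ R₁ • u ∈ SOS (MonoidAlgebra ℝ G) ∧ R₂ • u ∈ SOS (MonoidAlgebra ℝ G) := by
    refine Submodule.mul_induction_on hw (fun p hp q hq => ?_) (fun w₁ w₂ h₁ h₂ => ?_)
    · have hpp : p * star p ∈ (Iaug G) ^ (2 * m) := by
        have := Submodule.mul_mem_mul hp (star_pow_mem hp)
        rwa [← pow_add, show m + m = 2 * m by omega] at this
      have hqq : star q * q ∈ (Iaug G) ^ (2 * m) := by
        have := Submodule.mul_mem_mul (star_pow_mem hq) hq
        rwa [← pow_add, show m + m = 2 * m by omega] at this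
      obtain ⟨R₁, hR₁, hQ₁, hRu₁⟩ := hord2 (-(p * star p)) (neg_mem hpp)
        (by rw [star_neg, star_mul, star_star])
      obtain ⟨R₂, hR₂, hQ₂, hRu₂⟩ := hord2 (-(star q * q)) (neg_mem hqq)
        (by rw [star_neg, star_mul, star_star])
      refine ⟨R₁, R₂, hR₁, hR₂, ?_, hRu₁, hRu₂⟩
      have hId : (star x * (p * q) * y + star y * star (p * q) * x)
            + R₁ • (star x * u * x) + R₂ • (star y * u * y)
          = star (star p * x + q * y) * (star p * x + q * y)
            + star x * (-(p * star p) + R₁ • u) * x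
            + star y * (-(star q * q) + R₂ • u) * y := by
        simp only [star_add, star_mul, star_star, add_mul, mul_add, mul_neg, neg_mul,
          mul_smul_comm, smul_mul_assoc, mul_assoc]
        abel
      rw [hId]
      exact add_mem (add_mem (mem_SOS _) (SOS_conj hQ₁ x)) (SOS_conj hQ₂ y)
    · obtain ⟨R₁, R₂, hR₁, hR₂, hQ₁, hRu₁, hRu₂⟩ := h₁
      obtain ⟨R₁', R₂', hR₁', hR₂', hQ₂, hRu₁', hRu₂'⟩ := h₂
      refine ⟨R₁ + R₁', R₂ + R₂', by positivity, by positivity, ?_, ?_, ?_⟩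
      · have hId : (star x * (w₁ + w₂) * y + star y * star (w₁ + w₂) * x)
              + (R₁ + R₁') • (star x * u * x) + (R₂ + R₂') • (star y * u * y)
            = ((star x * w₁ * y + star y * star w₁ * x) + R₁ • (star x * u * x)
                + R₂ • (star y * u * y))
              + ((star x * w₂ * y + star y * star w₂ * x) + R₁' • (star x * u * x)
                + R₂' • (star y * u * y)) := by
          simp only [star_add, mul_add, add_mul, add_smul]
          abel
        rw [hId]; exact add_mem hQ₁ hQ₂
      · rw [add_smul]; exact add_mem hRu₁ hRu₁'
      · rw [add_smul]; exact add_mem hRu₂ hRu₂'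
  obtain ⟨R₁, R₂, hR₁, hR₂, hQmain, hRu₁, hRu₂⟩ := step1
  refine ⟨R₁ + R₂, by positivity, ?_⟩
  have hconv : (star x * w * y + star y * star w * x)
        + (R₁ + R₂) • (∑ s' ∈ S, star (1 - of ℝ G s') * u * (1 - of ℝ G s'))
      = ((star x * w * y + star y * star w * x) + R₁ • (star x * u * x)
          + R₂ • (star y * u * y))
        + R₁ • ((∑ s' ∈ S, star (1 - of ℝ G s') * u * (1 - of ℝ G s')) - star x * u * x)
        + R₂ • ((∑ s' ∈ S, star (1 - of ℝ G s') * u * (1 - of ℝ G s')) - star y * u * y) := by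
    module
  rw [hconv]
  have herase : ∀ s₀ ∈ S, (∑ s' ∈ S, star (1 - of ℝ G s') * u * (1 - of ℝ G s'))
      - star (1 - of ℝ G s₀) * u * (1 - of ℝ G s₀)
      = ∑ s' ∈ S.erase s₀, star (1 - of ℝ G s') * u * (1 - of ℝ G s') := by
    intro s₀ hs₀
    rw [← Finset.sum_erase_add S _ hs₀, add_sub_cancel_right]
  have hpart : ∀ (R : ℝ) (s₀ : G), s₀ ∈ S → R • u ∈ SOS (MonoidAlgebra ℝ G) →
      R • ((∑ s' ∈ S, star (1 - of ℝ G s') * u * (1 - of ℝ G s'))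
        - star (1 - of ℝ G s₀) * u * (1 - of ℝ G s₀)) ∈ SOS (MonoidAlgebra ℝ G) := by
    intro R s₀ hs₀ hRu
    rw [herase s₀ hs₀, Finset.smul_sum]
    refine AddSubmonoid.sum_mem _ fun s' _ => ?_
    have h : R • (star (1 - of ℝ G s') * u * (1 - of ℝ G s'))
        = star (1 - of ℝ G s') * (R • u) * (1 - of ℝ G s') := by
      rw [mul_smul_comm, smul_mul_assoc]
    rw [h]
    exact SOS_conj hRu _
  exact add_mem (add_mem hQmain (hpart R₁ s hs hRu₁)) (hpart R₂ t ht hRu₂)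

end Aux5
section Aux6
variable {G : Type} [Group G]

lemma step {S : Finset G} (hS : Subgroup.closure (S : Set G) = ⊤)
    (hsym : ∀ s ∈ S, s⁻¹ ∈ S) (m : ℕ) (hm : 1 ≤ m) (u : MonoidAlgebra ℝ G)
    (hu : u ∈ (Iaug G) ^ (2 * m))
    (hord : ∀ v ∈ (Iaug G) ^ (2 * m), star v = v →
      ∃ R : ℝ, 0 ≤ R ∧ v + R • u ∈ (Iaug G) ^ (2 * m) ∧
        v + R • u ∈ SOS (MonoidAlgebra ℝ G)) :
    (∑ s ∈ S, star (1 - of ℝ G s) * u * (1 - of ℝ G s)) ∈ (Iaug G) ^ (2 * (m + 1)) ∧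
    ∀ v ∈ (Iaug G) ^ (2 * (m + 1)), star v = v →
      ∃ R : ℝ, 0 ≤ R ∧
        v + R • (∑ s ∈ S, star (1 - of ℝ G s) * u * (1 - of ℝ G s))
          ∈ (Iaug G) ^ (2 * (m + 1)) ∧
        v + R • (∑ s ∈ S, star (1 - of ℝ G s) * u * (1 - of ℝ G s))
          ∈ SOS (MonoidAlgebra ℝ G) := by
  have hord2 : ∀ v ∈ (Iaug G) ^ (2 * m), star v = v →
      ∃ R : ℝ, 0 ≤ R ∧ v + R • u ∈ SOS (MonoidAlgebra ℝ G) ∧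
        R • u ∈ SOS (MonoidAlgebra ℝ G) := by
    by_cases hherm : star u = u
    · have huQ : u ∈ SOS (MonoidAlgebra ℝ G) := by
        obtain ⟨R, hR, _, hQ⟩ := hord u hu hherm
        have h1 : u + R • u = (1 + R) • u := by module
        have h2 : ((1 + R)⁻¹ : ℝ) • ((1 + R) • u) = u := by
          rw [smul_smul, inv_mul_cancel₀ (by positivity), one_smul]
        rw [← h2]
        exact SOS_smul (by positivity) (h1 ▸ hQ)
      intro v hv hvh
      obtain ⟨R, hR, _, hQ⟩ := hord v hv hvh
      exact ⟨R, hR, hQ, SOS_smul hR huQ⟩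
    · intro v hv hvh
      obtain ⟨R, hR, _, hQ⟩ := hord v hv hvh
      have hR0 : R = 0 := by
        have h1 := SOS_star hQ
        rw [star_add, hvh, star_smul'] at h1
        have h2 : R • (star u - u) = 0 := by
          rw [smul_sub, add_left_cancel h1, sub_self]
        rcases smul_eq_zero.mp h2 with h | h
        · exact h
        · exact absurd (by rwa [sub_eq_zero] at h) hherm
      refine ⟨0, le_rfl, ?_, ?_⟩
      · rw [zero_smul, add_zero]; rw [hR0, zero_smul, add_zero] at hQ; exact hQ
      · rw [zero_smul]; exact zero_mem _
  have hterm : ∀ s ∈ S,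
      star (1 - of ℝ G s) * u * (1 - of ℝ G s) ∈ (Iaug G) ^ (2 * (m + 1)) := by
    intro s _
    have h1 : star (1 - of ℝ G s) ∈ (Iaug G) ^ 1 := by
      rw [pow_one, star_one_sub]; exact one_sub_mem _
    have h2 : (1 - of ℝ G s) ∈ (Iaug G) ^ 1 := by rw [pow_one]; exact one_sub_mem _
    have h3 := Submodule.mul_mem_mul (Submodule.mul_mem_mul h1 hu) h2
    rwa [← pow_add, ← pow_add, show 1 + 2 * m + 1 = 2 * (m + 1) by omega] at h3
  have hu₁mem : (∑ s ∈ S, star (1 - of ℝ G s) * u * (1 - of ℝ G s))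
      ∈ (Iaug G) ^ (2 * (m + 1)) := Submodule.sum_mem _ hterm
  refine ⟨hu₁mem, ?_⟩
  intro v hv hvherm
  have hv' : v ∈ Submodule.span ℝ (GenT S (2 * m)) := by
    refine decomp2 hS hsym (2 * m) (by omega) ?_
    rwa [show 2 * m + 2 = 2 * (m + 1) by omega]
  have hLv : v + star v ∈ Submodule.span ℝ
      {z : MonoidAlgebra ℝ G | ∃ s ∈ S, ∃ t ∈ S, ∃ w ∈ (Iaug G) ^ (2 * m),
        z = star (1 - of ℝ G s) * w * (1 - of ℝ G t)
          + star (1 - of ℝ G t) * star w * (1 - of ℝ G s)} := by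
    refine Submodule.span_induction (fun z hz => ?_)
      (by rw [star_zero, add_zero]; exact zero_mem _)
      (fun a b _ _ ha hb => ?_) (fun r a _ ha => ?_) hv'
    · obtain ⟨s, hs, t, ht, w, hw, rfl⟩ := hz
      refine Submodule.subset_span ⟨s, hs, t, ht, w, hw, ?_⟩
      simp only [star_mul, star_star]; noncomm_ring
    · have h : (a + b) + star (a + b) = (a + star a) + (b + star b) := by
        rw [star_add]; abel
      rw [h]; exact add_mem ha hb
    · have h : (r • a) + star (r • a) = r • (a + star a) := by
        rw [star_smul', smul_add]
      rw [h]; exact Submodule.smul_mem _ r ha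
  have hv2 : v ∈ Submodule.span ℝ
      {z : MonoidAlgebra ℝ G | ∃ s ∈ S, ∃ t ∈ S, ∃ w ∈ (Iaug G) ^ (2 * m),
        z = star (1 - of ℝ G s) * w * (1 - of ℝ G t)
          + star (1 - of ℝ G t) * star w * (1 - of ℝ G s)} := by
    have hh : v = (2⁻¹ : ℝ) • (v + star v) := by rw [hvherm]; module
    rw [hh]; exact Submodule.smul_mem _ _ hLv
  have hGsmul : ∀ r : ℝ, ∀ z ∈
      {z : MonoidAlgebra ℝ G | ∃ s ∈ S, ∃ t ∈ S, ∃ w ∈ (Iaug G) ^ (2 * m),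
        z = star (1 - of ℝ G s) * w * (1 - of ℝ G t)
          + star (1 - of ℝ G t) * star w * (1 - of ℝ G s)}, r • z ∈
      {z : MonoidAlgebra ℝ G | ∃ s ∈ S, ∃ t ∈ S, ∃ w ∈ (Iaug G) ^ (2 * m),
        z = star (1 - of ℝ G s) * w * (1 - of ℝ G t)
          + star (1 - of ℝ G t) * star w * (1 - of ℝ G s)} := by
    intro r z hz
    obtain ⟨s, hs, t, ht, w, hw, rfl⟩ := hz
    refine ⟨s, hs, t, ht, r • w, Submodule.smul_mem _ r hw, ?_⟩
    rw [star_smul']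
    simp only [smul_add, mul_smul_comm, smul_mul_assoc]
  have hv3 := span_subset_addclosure hGsmul hv2
  have main : ∃ R : ℝ, 0 ≤ R ∧
      v + R • (∑ s ∈ S, star (1 - of ℝ G s) * u * (1 - of ℝ G s))
        ∈ SOS (MonoidAlgebra ℝ G) := by
    refine AddSubmonoid.closure_induction (fun z hz => ?_)
      ⟨0, le_rfl, by rw [zero_smul, add_zero]; exact zero_mem _⟩
      (fun a b _ _ ha hb => ?_) hv3
    · obtain ⟨s, hs, t, ht, w, hw, rfl⟩ := hz
      exact core S m u hord2 hs ht hw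
    · obtain ⟨R₁, hR₁, hQ₁⟩ := ha
      obtain ⟨R₂, hR₂, hQ₂⟩ := hb
      refine ⟨R₁ + R₂, by positivity, ?_⟩
      have h : (a + b) + (R₁ + R₂) • (∑ s ∈ S, star (1 - of ℝ G s) * u * (1 - of ℝ G s))
          = (a + R₁ • (∑ s ∈ S, star (1 - of ℝ G s) * u * (1 - of ℝ G s)))
            + (b + R₂ • (∑ s ∈ S, star (1 - of ℝ G s) * u * (1 - of ℝ G s))) := by
        module
      rw [h]; exact add_mem hQ₁ hQ₂
  obtain ⟨R, hR, hQ⟩ := main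
  exact ⟨R, hR, add_mem hv (Submodule.smul_mem _ R hu₁mem), hQ⟩

end Aux6
/-- If `u` is an order unit in `I^{2n₀}[G]`, then `uₙ` is an order unit in
`I^{2(n₀+n)}[G]` for each `n ≥ 1`. -/
theorem iter_order_unit (G : Type) [Group G] (S : Finset G)
    (hS : Subgroup.closure (S : Set G) = ⊤) (hsym : ∀ s ∈ S, s⁻¹ ∈ S)
    (n₀ : ℕ) (hn₀ : 1 ≤ n₀) (u : MonoidAlgebra ℝ G)
    (hu : u ∈ (Iaug G) ^ (2 * n₀))
    (hord : ∀ v ∈ (Iaug G) ^ (2 * n₀), star v = v →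
      ∃ R : ℝ, 0 ≤ R ∧ v + R • u ∈ (Iaug G) ^ (2 * n₀) ∧
        v + R • u ∈ SOS (MonoidAlgebra ℝ G))
    (n : ℕ) (hn : 1 ≤ n) :
    iter S u n ∈ (Iaug G) ^ (2 * (n₀ + n)) ∧
    ∀ v ∈ (Iaug G) ^ (2 * (n₀ + n)), star v = v →
      ∃ R : ℝ, 0 ≤ R ∧ v + R • iter S u n ∈ (Iaug G) ^ (2 * (n₀ + n)) ∧
        v + R • iter S u n ∈ SOS (MonoidAlgebra ℝ G) := by
  induction n, hn using Nat.le_induction with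
  | base =>
    simp only [iter]
    exact step hS hsym n₀ hn₀ u hu hord
  | succ n hn ih =>
    have h := step hS hsym (n₀ + n) (by omega) (iter S u n) ih.1 ih.2
    rw [show n₀ + (n + 1) = (n₀ + n) + 1 by omega]
    simp only [iter]
    exact h
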